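/- arXiv:1411.2747 — 4 statements merged into one kernel-verified Lean document; each statement's English description precedes it below -/
import Mathlib

section
/- For a bounded domain G ⊂ ℝⁿ and all x, y ∈ G, j*_G(x,y) ≥ |x-y| / diam(G). -/
/-!
Write `D = |x - y|` and `m = min {d(x), d(y)}`. Since `tanh (log u / 2) = (u - 1) / (u + 1)`,
`j*_G(x, y) = D / (D + 2m)`. The balls `B(x, m)` and `B(y, m)` are connected and miss `∂G`,
so they lie in `G`; prolonging the segment `[x, y]` by `m` beyond both endpoints gives two
points of `closure G` at distance `D + 2m`, hence `D + 2m ≤ diam G`.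
-/

open Metric Set

noncomputable def dd {n : ℕ} (G : Set (EuclideanSpace ℝ (Fin n))) (x : EuclideanSpace ℝ (Fin n)) : ℝ :=
  Metric.infDist x (frontier G)

noncomputable def jMet {n : ℕ} (G : Set (EuclideanSpace ℝ (Fin n))) (x y : EuclideanSpace ℝ (Fin n)) : ℝ :=
  Real.log (1 + dist x y / min (dd G x) (dd G y))

noncomputable def jStar {n : ℕ} (G : Set (EuclideanSpace ℝ (Fin n))) (x y : EuclideanSpace ℝ (Fin n)) : ℝ :=
  Real.tanh (jMet G x y / 2)

noncomputable def sMet {n : ℕ} (G : Set (EuclideanSpace ℝ (Fin n))) (x y : EuclideanSpace ℝ (Fin n)) : ℝ :=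
  ⨆ z : frontier G, dist x y / (dist x (z : EuclideanSpace ℝ (Fin n)) + dist (z : EuclideanSpace ℝ (Fin n)) y)

noncomputable def pMet {n : ℕ} (G : Set (EuclideanSpace ℝ (Fin n))) (x y : EuclideanSpace ℝ (Fin n)) : ℝ :=
  dist x y / Real.sqrt (dist x y ^ 2 + 4 * dd G x * dd G y)

noncomputable def vMet {n : ℕ} (G : Set (EuclideanSpace ℝ (Fin n))) (x y : EuclideanSpace ℝ (Fin n)) : ℝ :=
  ⨆ z : frontier G, EuclideanGeometry.angle x (z : EuclideanSpace ℝ (Fin n)) y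

theorem Real.tanh_half_log {u : ℝ} (hu : 0 < u) :
    Real.tanh (Real.log u / 2) = (u - 1) / (u + 1) := by
  have ha : 0 < Real.exp (Real.log u / 2) := Real.exp_pos _
  have ha_sq : Real.exp (Real.log u / 2) ^ 2 = u := by
    rw [← Real.exp_nat_mul, ← Real.exp_log hu, Real.log_exp]; ring_nf
  rw [Real.tanh_eq, Real.exp_neg]
  generalize Real.exp (Real.log u / 2) = a at ha ha_sq ⊢
  subst ha_sq
  field_simp

theorem IsPreconnected.subset_interior_of_disjoint_frontier {X : Type*} [TopologicalSpace X]
    {s t : Set X} (ht : IsPreconnected t) (hts : Disjoint t (frontier s))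
    (hne : (t ∩ s).Nonempty) : t ⊆ interior s := by
  have hcover : t ⊆ interior s ∪ (closure s)ᶜ := fun z hz ↦ by
    by_cases hzs : z ∈ closure s
    · exact .inl (by_contra fun h ↦ hts.notMem_of_mem_left hz ⟨hzs, h⟩)
    · exact .inr hzs
  obtain ⟨z, hzt, hzs⟩ := hne
  refine ht.subset_left_of_subset_union isOpen_interior isClosed_closure.isOpen_compl
    (disjoint_compl_right.mono_left interior_subset_closure) hcover ⟨z, hzt, ?_⟩
  exact (hcover hzt).resolve_right (not_not.2 (subset_closure hzs))

section NormedSpace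

variable {E : Type*} [NormedAddCommGroup E] [NormedSpace ℝ E]

theorem Metric.ball_infDist_frontier_subset_interior {s : Set E} {z : E} (hz : z ∈ s) :
    ball z (infDist z (frontier s)) ⊆ interior s := by
  rcases le_or_gt (infDist z (frontier s)) 0 with h | h
  · simp [ball_eq_empty.2 h]
  · exact (convex_ball _ _).isPreconnected.subset_interior_of_disjoint_frontier
      disjoint_ball_infDist ⟨z, mem_ball_self h, hz⟩

theorem Metric.closedBall_infDist_frontier_subset_closure {s : Set E} {z : E} (hz : z ∈ s) :
    closedBall z (infDist z (frontier s)) ⊆ closure s := by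
  rcases eq_or_ne (infDist z (frontier s)) 0 with h | h
  · simpa [h] using subset_closure hz
  · rw [← closure_ball z h]
    exact closure_mono ((ball_infDist_frontier_subset_interior hz).trans interior_subset)

theorem IsOpen.infDist_frontier_pos [Nontrivial E] {s : Set E} (hs : IsOpen s)
    (hsb : Bornology.IsBounded s) {z : E} (hz : z ∈ s) : 0 < infDist z (frontier s) := by
  have hne : (frontier s).Nonempty := nonempty_frontier_iff.2
    ⟨⟨z, hz⟩, fun h ↦ NormedSpace.unbounded_univ ℝ E (h ▸ hsb)⟩
  refine (isClosed_frontier.notMem_iff_infDist_pos hne).1 fun hzf ↦ hzf.2 ?_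
  rwa [hs.interior_eq]

theorem Metric.dist_add_two_mul_le_diam {s : Set E} (hs : Bornology.IsBounded s) {x y : E}
    (hxy : x ≠ y) {r : ℝ} (hr : 0 ≤ r) (hx : closedBall x r ⊆ closure s)
    (hy : closedBall y r ⊆ closure s) : dist x y + 2 * r ≤ diam s := by
  have hD : 0 < dist x y := dist_pos.2 hxy
  set p := x + (r / dist x y) • (x - y)
  set q := y + (r / dist x y) • (y - x)
  have hrD : ‖r / dist x y‖ * dist x y = r := by
    rw [Real.norm_of_nonneg (by positivity), div_mul_cancel₀ _ hD.ne']
  have hp : p ∈ closure s := hx <| by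
    rw [mem_closedBall, dist_eq_norm, add_sub_cancel_left, norm_smul, ← dist_eq_norm, hrD]
  have hq : q ∈ closure s := hy <| by
    rw [mem_closedBall, dist_eq_norm, add_sub_cancel_left, norm_smul, ← dist_eq_norm,
      dist_comm y x, hrD]
  have hqp : q - p = (1 + 2 * (r / dist x y)) • (y - x) := by module
  calc dist x y + 2 * r = dist q p := by
        rw [dist_eq_norm q p, hqp, norm_smul, ← dist_eq_norm, dist_comm y x,
          Real.norm_of_nonneg (by positivity)]
        field_simp
    _ ≤ diam (closure s) := dist_le_diam_of_mem hs.closure hq hp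
    _ = diam s := diam_closure s

end NormedSpace

theorem jStar_eq_dist_div {n : ℕ} {G : Set (EuclideanSpace ℝ (Fin n))} {x y : EuclideanSpace ℝ (Fin n)}
    (hm : 0 < min (dd G x) (dd G y)) :
    jStar G x y = dist x y / (dist x y + 2 * min (dd G x) (dd G y)) := by
  rw [jStar, jMet, Real.tanh_half_log (by positivity)]
  field_simp
  ring

theorem stmt4_general {n : ℕ} (G : Set (EuclideanSpace ℝ (Fin n)))
    (hGo : IsOpen G) (hGb : Bornology.IsBounded G)
    (x y : EuclideanSpace ℝ (Fin n)) (hx : x ∈ G) (hy : y ∈ G) :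
    jStar G x y ≥ dist x y / Metric.diam G := by
  rcases eq_or_ne x y with rfl | hxy
  · simp [jStar, jMet]
  have : Nontrivial (EuclideanSpace ℝ (Fin n)) := ⟨⟨x, y, hxy⟩⟩
  have hm : 0 < min (dd G x) (dd G y) :=
    lt_min (hGo.infDist_frontier_pos hGb hx) (hGo.infDist_frontier_pos hGb hy)
  have hbx : closedBall x (min (dd G x) (dd G y)) ⊆ closure G :=
    (closedBall_subset_closedBall (min_le_left _ _)).trans
      (closedBall_infDist_frontier_subset_closure hx)
  have hby : closedBall y (min (dd G x) (dd G y)) ⊆ closure G :=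
    (closedBall_subset_closedBall (min_le_right _ _)).trans
      (closedBall_infDist_frontier_subset_closure hy)
  rw [ge_iff_le, jStar_eq_dist_div hm]
  exact div_le_div_of_nonneg_left dist_nonneg (by positivity)
    (dist_add_two_mul_le_diam hGb hxy hm.le hbx hby)

theorem stmt4 {n : ℕ} (G : Set (EuclideanSpace ℝ (Fin n)))
    (hGo : IsOpen G) (hGc : IsConnected G) (hGb : Bornology.IsBounded G)
    (x y : EuclideanSpace ℝ (Fin n)) (hx : x ∈ G) (hy : y ∈ G) :
    jStar G x y ≥ dist x y / Metric.diam G :=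
  stmt4_general G hGo hGb x y hx hy
end

section
/- For a proper subdomain G of ℝⁿ and all x, y ∈ G, (1/√2)·p_G(x,y) ≤ s_G(x,y) ≤ 2·p_G(x,y). -/
open Metric Set

/-!
Both bounds compare `|x - y| / (|x - z| + |z - y|)` with `p_G(x, y)` using only the triangle
inequality and `d(x) ≤ |x - z|`, `d(y) ≤ |z - y|` for boundary points `z`. For the upper bound
this holds for every `z`, since `|x - y|² + 4 d(x) d(y) ≤ 4 (|x - z| + |z - y|)²`. For the lower
bound, assuming `d(x) ≤ d(y)`, take `z` a boundary point nearest to `x`: then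
`|x - z| + |z - y| ≤ |x - y| + 2 d(x)` and `(|x - y| + 2 d(x))² ≤ 2 (|x - y|² + 4 d(x) d(y))`.
-/

lemma div_le_two_mul_div_sqrt {r a b u v : ℝ} (hr : 0 ≤ r) (hu : 0 ≤ u) (hv : 0 ≤ v)
    (hrab : r ≤ a + b) (hua : u ≤ a) (hvb : v ≤ b) :
    r / (a + b) ≤ 2 * (r / √(r ^ 2 + 4 * u * v)) := by
  rcases hr.eq_or_lt with rfl | hr
  · simp
  have hS_le : √(r ^ 2 + 4 * u * v) ≤ 2 * (a + b) :=
    Real.sqrt_le_iff.mpr ⟨by linarith, by nlinarith⟩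
  calc r / (a + b) ≤ r / (√(r ^ 2 + 4 * u * v) / 2) :=
        div_le_div_of_nonneg_left hr.le (by positivity) (by linarith)
    _ = 2 * (r / √(r ^ 2 + 4 * u * v)) := by field_simp

lemma inv_sqrt_two_mul_div_sqrt_le {r a b u v : ℝ} (hr : 0 ≤ r) (hu : 0 ≤ u) (huv : u ≤ v)
    (hrab : r ≤ a + b) (habu : a + b ≤ r + 2 * u) :
    1 / √2 * (r / √(r ^ 2 + 4 * u * v)) ≤ r / (a + b) := by
  rcases hr.eq_or_lt with rfl | hr
  · simp
  have h_le : r + 2 * u ≤ √(2 * (r ^ 2 + 4 * u * v)) :=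
    Real.le_sqrt_of_sq_le (by nlinarith [sq_nonneg (r - 2 * u), mul_le_mul_of_nonneg_left huv hu])
  calc 1 / √2 * (r / √(r ^ 2 + 4 * u * v)) = r / √(2 * (r ^ 2 + 4 * u * v)) := by
        rw [Real.sqrt_mul zero_le_two]; field_simp
    _ ≤ r / (a + b) := div_le_div_of_nonneg_left hr.le (by linarith) (by linarith)

lemma dist_div_dist_add_dist_le_one {α : Type*} [PseudoMetricSpace α] (x y z : α) :
    dist x y / (dist x z + dist z y) ≤ 1 :=
  div_le_one_of_le₀ (dist_triangle x z y) (by positivity)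

section Metrics

variable {n : ℕ} (G : Set (EuclideanSpace ℝ (Fin n))) (x y : EuclideanSpace ℝ (Fin n))

lemma dd_nonneg : 0 ≤ dd G x := infDist_nonneg

lemma dd_le_dist {z : EuclideanSpace ℝ (Fin n)} (hz : z ∈ frontier G) : dd G x ≤ dist x z :=
  infDist_le_dist_of_mem hz

lemma pMet_symm : pMet G x y = pMet G y x := by
  rw [pMet, pMet, dist_comm, mul_right_comm]

lemma sMet_symm : sMet G x y = sMet G y x := by
  unfold sMet
  congr 1 with z
  rw [dist_comm x y, dist_comm x, dist_comm _ y, add_comm]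

lemma le_sMet {z : EuclideanSpace ℝ (Fin n)} (hz : z ∈ frontier G) :
    dist x y / (dist x z + dist z y) ≤ sMet G x y :=
  le_ciSup (f := fun z : frontier G => dist x y / (dist x z + dist (z : EuclideanSpace ℝ (Fin n)) y))
    ⟨1, by rintro _ ⟨w, rfl⟩; exact dist_div_dist_add_dist_le_one x y w⟩ ⟨z, hz⟩

lemma sMet_le_two_mul_pMet : sMet G x y ≤ 2 * pMet G x y := by
  refine Real.iSup_le (fun z => ?_) (by unfold pMet; positivity)
  exact div_le_two_mul_div_sqrt dist_nonneg (dd_nonneg G x) (dd_nonneg G y) (dist_triangle _ _ _)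
    (dd_le_dist G x z.2) (dist_comm y z ▸ dd_le_dist G y z.2)

lemma inv_sqrt_two_mul_pMet_le_sMet_of_dd_le (hF : (frontier G).Nonempty)
    (hxy : dd G x ≤ dd G y) : 1 / √2 * pMet G x y ≤ sMet G x y := by
  obtain ⟨z, hzF, hz⟩ := isClosed_frontier.exists_infDist_eq_dist hF x
  have hxz : dist x z = dd G x := hz.symm
  have hzy : dist z y ≤ dd G x + dist x y := by
    rw [← hxz, dist_comm x z]; exact dist_triangle z x y
  refine le_trans ?_ (le_sMet G x y hzF)
  exact inv_sqrt_two_mul_div_sqrt_le dist_nonneg (dd_nonneg G x) hxy (dist_triangle _ _ _)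
    (by linarith)

lemma inv_sqrt_two_mul_pMet_le_sMet (hF : (frontier G).Nonempty) :
    1 / √2 * pMet G x y ≤ sMet G x y := by
  rcases le_total (dd G x) (dd G y) with hxy | hyx
  · exact inv_sqrt_two_mul_pMet_le_sMet_of_dd_le G x y hF hxy
  · rw [pMet_symm, sMet_symm]
    exact inv_sqrt_two_mul_pMet_le_sMet_of_dd_le G y x hF hyx

end Metrics

theorem stmt5_general {n : ℕ} (G : Set (EuclideanSpace ℝ (Fin n)))
    (hGne : G ≠ univ)
    (x y : EuclideanSpace ℝ (Fin n)) (hx : x ∈ G) :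
    (1 / Real.sqrt 2) * pMet G x y ≤ sMet G x y ∧ sMet G x y ≤ 2 * pMet G x y :=
  ⟨inv_sqrt_two_mul_pMet_le_sMet G x y (nonempty_frontier_iff.mpr ⟨⟨x, hx⟩, hGne⟩),
    sMet_le_two_mul_pMet G x y⟩

theorem stmt5 {n : ℕ} (G : Set (EuclideanSpace ℝ (Fin n)))
    (hGo : IsOpen G) (hGc : IsConnected G) (hGne : G ≠ univ)
    (x y : EuclideanSpace ℝ (Fin n)) (hx : x ∈ G) (hy : y ∈ G) :
    (1 / Real.sqrt 2) * pMet G x y ≤ sMet G x y ∧ sMet G x y ≤ 2 * pMet G x y :=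
  stmt5_general G hGne x y hx
end

section
/- For a convex proper subdomain G of ℝⁿ and all x, y ∈ G, with m = min{d(x),d(y)}, one has tanh(j_G(x,y)/2) ≤ s_G(x,y) ≤ |x-y|/√(|x-y|² + 4m²) ≤ tanh(j_G(x,y)). -/
open Metric Set

section Aux

open Set.Notation RealInnerProductSpace

lemma tanh_log_aux {s : ℝ} (hs : 1 ≤ s) :
    Real.tanh (Real.log s) = (s^2 - 1)/(s^2 + 1) := by
  have hs0 : (0:ℝ) < s := by linarith
  rw [Real.tanh_eq_sinh_div_cosh, Real.sinh_eq, Real.cosh_eq, Real.exp_neg,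
    Real.exp_log hs0]
  have h1 : (0:ℝ) < s^2 + 1 := by positivity
  field_simp

lemma tanh_half_log_aux {u : ℝ} (hu : 0 ≤ u) :
    Real.tanh (Real.log (1 + u) / 2) = u / (u + 2) := by
  have h1 : (0:ℝ) ≤ 1 + u := by linarith
  rw [← Real.log_sqrt h1, tanh_log_aux (by
    nlinarith [Real.sq_sqrt h1, Real.sqrt_nonneg (1+u)]), Real.sq_sqrt h1]
  ring_nf

lemma key_ineq {E : Type*} [NormedAddCommGroup E] [InnerProductSpace ℝ E]
    (x y z u : E) (hu : ‖u‖ = 1) {m : ℝ} (hm : 0 ≤ m)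
    (hp : m ≤ ⟪z - x, u⟫) (hq : m ≤ ⟪z - y, u⟫) :
    Real.sqrt (dist x y ^ 2 + 4 * m ^ 2) ≤ dist x z + dist z y := by
  set p := ⟪z - x, u⟫ with hpdef
  set q := ⟪z - y, u⟫ with hqdef
  set a := ‖x - z‖ with hadef
  set b := ‖y - z‖ with hbdef
  have ha0 : 0 ≤ a := norm_nonneg _
  have hb0 : 0 ≤ b := norm_nonneg _
  have hpa : p ≤ a := by
    calc p ≤ ‖z - x‖ * ‖u‖ := real_inner_le_norm _ _
    _ = a := by rw [hu, mul_one, norm_sub_rev]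
  have hqb : q ≤ b := by
    calc q ≤ ‖z - y‖ * ‖u‖ := real_inner_le_norm _ _
    _ = b := by rw [hu, mul_one, norm_sub_rev]
  have huu : ⟪u, u⟫ = 1 := by
    rw [real_inner_self_eq_norm_sq, hu]; norm_num
  have hXu : ⟪x - z, u⟫ = -p := by
    rw [hpdef, ← inner_neg_left]; congr 1; abel
  have hYu : ⟪y - z, u⟫ = -q := by
    rw [hqdef, ← inner_neg_left]; congr 1; abel
  have hXu' : ⟪u, x - z⟫ = -p := by rw [real_inner_comm]; exact hXu
  have hYu' : ⟪u, y - z⟫ = -q := by rw [real_inner_comm]; exact hYu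
  set A := ‖(x - z) + p • u‖ with hAdef
  set B := ‖(y - z) + q • u‖ with hBdef
  have hA0 : 0 ≤ A := norm_nonneg _
  have hB0 : 0 ≤ B := norm_nonneg _
  have hA2 : a ^ 2 = p ^ 2 + A ^ 2 := by
    rw [hAdef, norm_add_sq_real, real_inner_smul_right, hXu, norm_smul, hu]
    simp only [Real.norm_eq_abs, mul_one, mul_pow, sq_abs]
    ring
  have hB2 : b ^ 2 = q ^ 2 + B ^ 2 := by
    rw [hBdef, norm_add_sq_real, real_inner_smul_right, hYu, norm_smul, hu]
    simp only [Real.norm_eq_abs, mul_one, mul_pow, sq_abs]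
    ring
  set I := ⟪x - z, y - z⟫ with hIdef
  have hI' : ⟪(x - z) + p • u, (y - z) + q • u⟫ = I - p * q := by
    simp only [inner_add_left, inner_add_right, real_inner_smul_left,
      real_inner_smul_right, huu, hXu, hYu, hXu', hYu', ← hIdef]
    ring
  have hIge : p * q - A * B ≤ I := by
    have h := abs_real_inner_le_norm ((x - z) + p • u) ((y - z) + q • u)
    rw [hI', ← hAdef, ← hBdef] at h
    have := neg_abs_le (I - p * q)
    nlinarith [h]
  have ht : dist x y ^ 2 = a ^ 2 - 2 * I + b ^ 2 := by
    have hxy : x - y = (x - z) - (y - z) := by abel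
    rw [dist_eq_norm, hxy, norm_sub_sq_real, ← hIdef, ← hadef, ← hbdef]
  have h2 : (p * q + A * B) ^ 2 ≤ (a * b) ^ 2 := by
    have he : (a * b) ^ 2 = (p ^ 2 + A ^ 2) * (q ^ 2 + B ^ 2) := by
      rw [mul_pow, hA2, hB2]
    nlinarith [sq_nonneg (q * A - p * B)]
  have hab : p * q + A * B ≤ a * b :=
    le_of_pow_le_pow_left₀ two_ne_zero (mul_nonneg ha0 hb0) h2
  have hpq : m * m ≤ p * q := mul_le_mul hp hq hm (hm.trans hp)
  have hfin : dist x y ^ 2 + 4 * m ^ 2 ≤ (a + b) ^ 2 := by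
    have hexp : (a + b) ^ 2 = a ^ 2 + 2 * (a * b) + b ^ 2 := by ring
    have hm2 : m ^ 2 = m * m := sq m
    linarith
  have hs := Real.sqrt_le_sqrt hfin
  rw [Real.sqrt_sq (by positivity)] at hs
  have hda : dist x z = a := by rw [dist_eq_norm]
  have hdb : dist z y = b := by rw [dist_eq_norm, norm_sub_rev]
  rw [hda, hdb]
  exact hs

lemma ball_dd_subset {E : Type*} [NormedAddCommGroup E] [NormedSpace ℝ E]
    (G : Set E) (hGo : IsOpen G) {x : E} (hx : x ∈ G) :
    ball x (infDist x (frontier G)) ⊆ G := by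
  rcases le_or_gt (infDist x (frontier G)) 0 with h | h
  · rw [ball_eq_empty.mpr h]; exact empty_subset _
  · have hdisj : Disjoint (frontier G) (ball x (infDist x (frontier G))) :=
      disjoint_ball_infDist.symm
    have hclopen := isClopen_preimage_val hGo hdisj
    have hpre : PreconnectedSpace (ball x (infDist x (frontier G))) :=
      Subtype.preconnectedSpace (convex_ball x _).isPreconnected
    intro w hw
    have huniv : (ball x (infDist x (frontier G))) ↓∩ G = univ :=
      hclopen.eq_univ ⟨⟨x, mem_ball_self h⟩, hx⟩
    have hmem : (⟨w, hw⟩ : ball x (infDist x (frontier G))) ∈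
        (ball x (infDist x (frontier G))) ↓∩ G := huniv ▸ mem_univ _
    exact hmem

lemma sep_lemma {E : Type*} [NormedAddCommGroup E] [InnerProductSpace ℝ E] [CompleteSpace E]
    (G : Set E) (hGo : IsOpen G) (hGconv : Convex ℝ G)
    {x y z : E} (hx : x ∈ G) (hy : y ∈ G) (hz : z ∈ frontier G) :
    ∃ u : E, ‖u‖ = 1 ∧ infDist x (frontier G) ≤ ⟪z - x, u⟫ ∧
      infDist y (frontier G) ≤ ⟪z - y, u⟫ := by
  have hzG : z ∉ G := by
    rw [hGo.frontier_eq] at hz; exact hz.2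
  obtain ⟨f, hf⟩ := geometric_hahn_banach_open_point hGconv hGo hzG
  set v := (InnerProductSpace.toDual ℝ E).symm f with hvdef
  have hva : ∀ a ∈ G, ⟪v, a⟫ < ⟪v, z⟫ := by
    intro a ha
    rw [hvdef, InnerProductSpace.toDual_symm_apply, InnerProductSpace.toDual_symm_apply]
    exact hf a ha
  have hv0 : v ≠ 0 := by
    intro h
    have := hva x hx
    rw [h] at this
    simp at this
  set u := ‖v‖⁻¹ • v with hudef
  have hu : ‖u‖ = 1 := norm_smul_inv_norm hv0
  have hnv : (0:ℝ) < ‖v‖ := norm_pos_iff.mpr hv0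
  have hvu' : ⟪v, u⟫ = ‖v‖ := by
    rw [hudef, real_inner_smul_right, real_inner_self_eq_norm_mul_norm]
    field_simp
  have key : ∀ w : E, w ∈ G → infDist w (frontier G) ≤ ⟪z - w, u⟫ := by
    intro w hw
    by_contra hcon
    push_neg at hcon
    set s := ⟪z - w, u⟫ with hsdef
    have hvzw : ⟪v, z - w⟫ = ‖v‖ * s := by
      have h1 : s = ‖v‖⁻¹ * ⟪z - w, v⟫ := by
        rw [hsdef, hudef, real_inner_smul_right]
      rw [real_inner_comm, h1]
      field_simp
    have hs0 : 0 < s := by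
      have h1 : ⟪v, w⟫ < ⟪v, z⟫ := hva w hw
      have h2 : ⟪v, z - w⟫ = ⟪v, z⟫ - ⟪v, w⟫ := inner_sub_right v z w
      have h3 : 0 < ‖v‖ * s := by rw [← hvzw]; rw [h2]; linarith
      have h5 : s = ‖v‖⁻¹ * (‖v‖ * s) := by field_simp
      rw [h5]
      positivity
    have hwp : w + s • u ∈ ball w (infDist w (frontier G)) := by
      rw [mem_ball, dist_eq_norm]
      have : w + s • u - w = s • u := by abel
      rw [this, norm_smul, hu, mul_one, Real.norm_eq_abs, abs_of_pos hs0]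
      exact hcon
    have hwpG : w + s • u ∈ G := ball_dd_subset G hGo hw hwp
    have h5 : ⟪v, w + s • u⟫ < ⟪v, z⟫ := hva _ hwpG
    have h6 : ⟪v, w + s • u⟫ = ⟪v, w⟫ + s * ‖v‖ := by
      rw [inner_add_right, real_inner_smul_right, hvu']
    have h7 : ⟪v, z⟫ = ⟪v, w⟫ + ‖v‖ * s := by
      have := hvzw
      rw [inner_sub_right] at this
      linarith
    rw [h6, h7] at h5
    linarith
  exact ⟨u, hu, key x hx, key y hy⟩

end Aux

theorem stmt9 {n : ℕ} (G : Set (EuclideanSpace ℝ (Fin n)))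
    (hGo : IsOpen G) (hGconv : Convex ℝ G) (hGne : G ≠ univ) (hGnonempty : G.Nonempty)
    (x y : EuclideanSpace ℝ (Fin n)) (hx : x ∈ G) (hy : y ∈ G) :
    Real.tanh (jMet G x y / 2) ≤ sMet G x y ∧
    sMet G x y ≤ dist x y / Real.sqrt (dist x y ^ 2 + 4 * (min (dd G x) (dd G y)) ^ 2) ∧
    dist x y / Real.sqrt (dist x y ^ 2 + 4 * (min (dd G x) (dd G y)) ^ 2) ≤
      Real.tanh (jMet G x y) := by
  have hfr : (frontier G).Nonempty := nonempty_frontier_iff.mpr ⟨hGnonempty, hGne⟩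
  haveI : Nonempty (frontier G) := hfr.to_subtype
  have hxf : x ∉ frontier G := by rw [hGo.frontier_eq]; exact fun h => h.2 hx
  have hyf : y ∉ frontier G := by rw [hGo.frontier_eq]; exact fun h => h.2 hy
  have hdx : 0 < dd G x := (isClosed_frontier.notMem_iff_infDist_pos hfr).mp hxf
  have hdy : 0 < dd G y := (isClosed_frontier.notMem_iff_infDist_pos hfr).mp hyf
  set m := min (dd G x) (dd G y) with hmdef
  set t := dist x y with htdef
  have hm : 0 < m := lt_min hdx hdy
  have ht0 : 0 ≤ t := dist_nonneg
  have hmx : m ≤ dd G x := min_le_left _ _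
  have hmy : m ≤ dd G y := min_le_right _ _
  set S := Real.sqrt (t ^ 2 + 4 * m ^ 2) with hSdef
  have hS : 0 < S := Real.sqrt_pos.mpr (by positivity)
  have hS2 : S ^ 2 = t ^ 2 + 4 * m ^ 2 := Real.sq_sqrt (by positivity)
  have hden : ∀ z : frontier G, S ≤ dist x (z : EuclideanSpace ℝ (Fin n)) +
      dist (z : EuclideanSpace ℝ (Fin n)) y := by
    intro z
    obtain ⟨u, hu, hpx, hpy⟩ := sep_lemma G hGo hGconv hx hy z.2
    exact key_ineq x y (z : EuclideanSpace ℝ (Fin n)) u hu hm.le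
      (le_trans hmx hpx) (le_trans hmy hpy)
  set F : frontier G → ℝ := fun z =>
    t / (dist x (z : EuclideanSpace ℝ (Fin n)) + dist (z : EuclideanSpace ℝ (Fin n)) y)
    with hFdef
  have hsMet : sMet G x y = ⨆ z : frontier G, F z := rfl
  have hdpos : ∀ z : frontier G, 0 < dist x (z : EuclideanSpace ℝ (Fin n)) +
      dist (z : EuclideanSpace ℝ (Fin n)) y := fun z => lt_of_lt_of_le hS (hden z)
  have hbdd : BddAbove (range F) := by
    refine ⟨1, ?_⟩
    rintro r ⟨z, rfl⟩
    exact (div_le_one (hdpos z)).mpr (dist_triangle x _ y)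
  have hjm : jMet G x y = Real.log (1 + t / m) := rfl
  refine ⟨?_, ?_, ?_⟩
  · -- tanh (j/2) ≤ sMet
    have hj2 : Real.tanh (jMet G x y / 2) = t / (t + 2 * m) := by
      rw [hjm, tanh_half_log_aux (by positivity)]
      have h4 : t / m + 2 ≠ 0 := by positivity
      field_simp
    rw [hj2, hsMet]
    rcases min_cases (dd G x) (dd G y) with ⟨hmeq, _⟩ | ⟨hmeq, _⟩
    · obtain ⟨z0, hz0mem, hz0d⟩ := isClosed_frontier.exists_infDist_eq_dist hfr x
      have h1 : dist x z0 = m := by rw [hmdef, hmeq]; exact hz0d.symm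
      have h2 : dist z0 y ≤ m + t := by
        calc dist z0 y ≤ dist z0 x + dist x y := dist_triangle _ _ _
        _ = m + t := by rw [dist_comm z0 x, h1]
      have h3 : t / (t + 2 * m) ≤ F ⟨z0, hz0mem⟩ := by
        apply div_le_div_of_nonneg_left ht0 (hdpos ⟨z0, hz0mem⟩)
        rw [show ((⟨z0, hz0mem⟩ : frontier G) : EuclideanSpace ℝ (Fin n)) = z0 from rfl, h1]
        linarith
      exact h3.trans (le_ciSup hbdd ⟨z0, hz0mem⟩)
    · obtain ⟨z0, hz0mem, hz0d⟩ := isClosed_frontier.exists_infDist_eq_dist hfr y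
      have h1 : dist y z0 = m := by rw [hmdef, hmeq]; exact hz0d.symm
      have h2 : dist x z0 ≤ t + m := by
        calc dist x z0 ≤ dist x y + dist y z0 := dist_triangle _ _ _
        _ = t + m := by rw [h1]
      have h3 : t / (t + 2 * m) ≤ F ⟨z0, hz0mem⟩ := by
        apply div_le_div_of_nonneg_left ht0 (hdpos ⟨z0, hz0mem⟩)
        rw [show ((⟨z0, hz0mem⟩ : frontier G) : EuclideanSpace ℝ (Fin n)) = z0 from rfl,
          dist_comm z0 y, h1]
        linarith
      exact h3.trans (le_ciSup hbdd ⟨z0, hz0mem⟩)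
  · -- sMet ≤ t / S
    rw [hsMet]
    apply ciSup_le
    intro z
    exact div_le_div_of_nonneg_left ht0 hS (hden z)
  · -- t / S ≤ tanh j
    have hj : Real.tanh (jMet G x y) =
        (t ^ 2 + 2 * t * m) / (t ^ 2 + 2 * t * m + 2 * m ^ 2) := by
      rw [hjm, tanh_log_aux ((le_add_iff_nonneg_right 1).mpr (by positivity : (0:ℝ) ≤ t / m))]
      rw [div_eq_div_iff (by positivity) (by positivity)]
      field_simp
      ring
    rw [hj]
    have hd2 : (0:ℝ) < t ^ 2 + 2 * t * m + 2 * m ^ 2 := by positivity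
    rw [div_le_div_iff₀ hS hd2]
    have hkey : (t * (t ^ 2 + 2 * t * m + 2 * m ^ 2)) ^ 2 ≤
        ((t ^ 2 + 2 * t * m) * S) ^ 2 := by
      have hdiff : ((t ^ 2 + 2 * t * m) * S) ^ 2 -
          (t * (t ^ 2 + 2 * t * m + 2 * m ^ 2)) ^ 2 =
          8 * t ^ 3 * m ^ 3 + 12 * t ^ 2 * m ^ 4 := by
        rw [mul_pow, hS2]; ring
      nlinarith [pow_nonneg ht0 3, pow_nonneg hm.le 3, pow_nonneg ht0 2, pow_nonneg hm.le 4,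
        mul_nonneg (pow_nonneg ht0 3) (pow_nonneg hm.le 3),
        mul_nonneg (pow_nonneg ht0 2) (pow_nonneg hm.le 4)]
    have hrhs : 0 ≤ (t ^ 2 + 2 * t * m) * S := by
      apply mul_nonneg _ hS.le
      nlinarith [mul_nonneg ht0 hm.le]
    exact le_of_pow_le_pow_left₀ two_ne_zero hrhs hkey
end

section
/- For a convex proper subdomain G of ℝⁿ and all x, y ∈ G, s_G(x,y) ≤ √2·j*_G(x,y). -/
open Metric Set

/-! By convexity, every boundary point `z` lies on a supporting hyperplane with unit normal `e`,
and the distance from `w ∈ G` to `∂G` is at most the height `⟪e, z - w⟫` of that hyperplane above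
`w`. Together with `2⟪e, X⟫⟪e, Y⟫ ≤ ‖X‖‖Y‖ + ⟪X, Y⟫` this gives
`|x - y|² + 4 d(x) d(y) ≤ (|x - z| + |z - y|)²`, that is `s_G ≤ p_G`. Since
`j*_G(x, y) = |x - y| / (|x - y| + 2 min {d(x), d(y)})`, the bound `p_G ≤ √2 j*_G` then reduces to
`(a + 2m)² ≤ 2 (a² + 4m²)`. -/

open scoped InnerProductSpace

section InnerProductSpace

variable {E : Type*} [NormedAddCommGroup E] [InnerProductSpace ℝ E]

/- `2⟪e, Y⟫ e - Y` is the reflection of `Y` in the line `ℝ e`, so it has norm `‖Y‖` and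
Cauchy–Schwarz applies to its inner product with `X`. -/
lemma two_mul_inner_mul_inner_le (e X Y : E) (he : ‖e‖ = 1) :
    2 * (⟪e, X⟫_ℝ * ⟪e, Y⟫_ℝ) ≤ ‖X‖ * ‖Y‖ + ⟪X, Y⟫_ℝ := by
  have hreflect : ‖(2 * ⟪e, Y⟫_ℝ) • e - Y‖ = ‖Y‖ := by
    rw [← sq_eq_sq₀ (norm_nonneg _) (norm_nonneg _), norm_sub_sq_real, norm_smul,
      real_inner_smul_left, he, Real.norm_eq_abs, mul_pow, sq_abs]
    ring
  have hCS := real_inner_le_norm X ((2 * ⟪e, Y⟫_ℝ) • e - Y)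
  rw [hreflect, inner_sub_right, real_inner_smul_right, real_inner_comm e X] at hCS
  linarith

lemma exists_unit_inner_lt_of_notMem [CompleteSpace E] {G : Set E} (hGo : IsOpen G)
    (hGconv : Convex ℝ G) (hG : G.Nonempty) {z : E} (hz : z ∉ G) :
    ∃ e : E, ‖e‖ = 1 ∧ ∀ w ∈ G, ⟪e, w⟫_ℝ < ⟪e, z⟫_ℝ := by
  obtain ⟨f, hf⟩ := geometric_hahn_banach_open_point hGconv hGo hz
  set u := (InnerProductSpace.toDual ℝ E).symm f
  have hu : ∀ w, ⟪u, w⟫_ℝ = f w := fun w => InnerProductSpace.toDual_symm_apply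
  have hu0 : u ≠ 0 := by
    obtain ⟨w, hw⟩ := hG
    intro h
    simpa [← hu, h] using hf w hw
  refine ⟨‖u‖⁻¹ • u, norm_smul_inv_norm hu0, fun w hw => ?_⟩
  simp only [real_inner_smul_left, hu]
  exact mul_lt_mul_of_pos_left (hf w hw) (inv_pos.mpr (norm_pos_iff.mpr hu0))

lemma infDist_frontier_le_inner_sub [FiniteDimensional ℝ E] {G : Set E} {e z w : E}
    (he : ‖e‖ = 1) (hsep : ∀ w ∈ G, ⟪e, w⟫_ℝ < ⟪e, z⟫_ℝ) (hw : w ∈ G) :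
    infDist w (frontier G) ≤ ⟪e, z - w⟫_ℝ := by
  set c := ⟪e, z - w⟫_ℝ
  have hc : 0 < c := by simp only [c, inner_sub_right]; linarith [hsep w hw]
  have hp : w + c • e ∉ G := fun h => by
    have := hsep _ h
    rw [inner_add_right, real_inner_smul_right, real_inner_self_eq_norm_sq, he] at this
    simp only [c, inner_sub_right] at this
    linarith
  have hGne : G ≠ univ := fun h => hp (h ▸ mem_univ _)
  obtain ⟨q, hq, hwq⟩ := exists_mem_frontier_infDist_compl_eq_dist hw hGne
  calc infDist w (frontier G) ≤ dist w q := infDist_le_dist_of_mem hq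
    _ = infDist w Gᶜ := hwq.symm
    _ ≤ dist w (w + c • e) := infDist_le_dist_of_mem hp
    _ = c := by rw [dist_self_add_right, norm_smul, he, mul_one, Real.norm_of_nonneg hc.le]

lemma dist_sq_add_four_mul_infDist_le [FiniteDimensional ℝ E] {G : Set E} (hGo : IsOpen G)
    (hGconv : Convex ℝ G) {x y z : E} (hx : x ∈ G) (hy : y ∈ G) (hz : z ∈ frontier G) :
    dist x y ^ 2 + 4 * infDist x (frontier G) * infDist y (frontier G) ≤
      (dist x z + dist z y) ^ 2 := by
  have hzG : z ∉ G := by rw [hGo.frontier_eq] at hz; exact hz.2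
  obtain ⟨e, he, hsep⟩ := exists_unit_inner_lt_of_notMem hGo hGconv ⟨x, hx⟩ hzG
  have hdx := infDist_frontier_le_inner_sub he hsep hx
  have hdy := infDist_frontier_le_inner_sub he hsep hy
  have hprod : infDist x (frontier G) * infDist y (frontier G) ≤ ⟪e, z - x⟫_ℝ * ⟪e, z - y⟫_ℝ :=
    mul_le_mul hdx hdy infDist_nonneg (infDist_nonneg.trans hdx)
  have hxy : dist x y ^ 2 = ‖z - x‖ ^ 2 - 2 * ⟪z - x, z - y⟫_ℝ + ‖z - y‖ ^ 2 := by
    rw [dist_eq_norm, ← norm_sub_sq_real, sub_sub_sub_cancel_left, norm_sub_rev]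
  rw [hxy, dist_comm x z, dist_eq_norm, dist_eq_norm]
  nlinarith [two_mul_inner_mul_inner_le e (z - x) (z - y) he]

end InnerProductSpace

lemma Real.tanh_log_div_two {s : ℝ} (hs : 0 < s) :
    Real.tanh (Real.log s / 2) = (s - 1) / (s + 1) := by
  have hsq : Real.exp (Real.log s / 2) ^ 2 = s := by
    rw [sq, ← Real.exp_add, add_halves, Real.exp_log hs]
  have ht := Real.exp_pos (Real.log s / 2)
  rw [Real.tanh_eq, Real.exp_neg]
  generalize Real.exp (Real.log s / 2) = t at hsq ht ⊢
  subst hsq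
  field_simp

section Metrics

variable {n : ℕ} {G : Set (EuclideanSpace ℝ (Fin n))} {x y : EuclideanSpace ℝ (Fin n)}

lemma dd_pos (hGo : IsOpen G) (hGne : G ≠ univ) (hx : x ∈ G) : 0 < dd G x := by
  have hfr : (frontier G).Nonempty := nonempty_frontier_iff.mpr ⟨⟨x, hx⟩, hGne⟩
  refine ((isClosed_frontier (s := G)).notMem_iff_infDist_pos hfr).mp fun h => ?_
  rw [hGo.frontier_eq] at h
  exact h.2 hx

lemma jStar_eq (hx : 0 < dd G x) (hy : 0 < dd G y) :
    jStar G x y = dist x y / (dist x y + 2 * min (dd G x) (dd G y)) := by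
  have hm : 0 < min (dd G x) (dd G y) := lt_min hx hy
  rw [jStar, jMet, Real.tanh_log_div_two (by positivity)]
  field_simp
  ring

lemma sMet_le_pMet (hGo : IsOpen G) (hGconv : Convex ℝ G) (hGne : G ≠ univ) (hx : x ∈ G)
    (hy : y ∈ G) : sMet G x y ≤ pMet G x y := by
  have : Nonempty (frontier G) :=
    (nonempty_frontier_iff.mpr ⟨⟨x, hx⟩, hGne⟩).to_subtype
  refine ciSup_le fun ⟨z, hz⟩ => ?_
  rcases (dist_nonneg (x := x) (y := y)).eq_or_lt with hxy | hxy
  · simp [pMet, ← hxy]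
  have hdx : 0 ≤ dd G x := infDist_nonneg
  have hdy : 0 ≤ dd G y := infDist_nonneg
  refine div_le_div_of_nonneg_left dist_nonneg (Real.sqrt_pos.mpr (by positivity)) ?_
  rw [Real.sqrt_le_left (by positivity)]
  exact dist_sq_add_four_mul_infDist_le hGo hGconv hx hy hz

lemma pMet_le_sqrt_two_mul_jStar (hx : 0 < dd G x) (hy : 0 < dd G y) :
    pMet G x y ≤ Real.sqrt 2 * jStar G x y := by
  set d := dist x y
  set m := min (dd G x) (dd G y)
  have hd : 0 ≤ d := dist_nonneg
  have hm : 0 < m := lt_min hx hy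
  have hmm : m * m ≤ dd G x * dd G y :=
    mul_le_mul (min_le_left _ _) (min_le_right _ _) hm.le hx.le
  rw [jStar_eq hx hy, pMet, show √2 * (d / (d + 2 * m)) = d / ((d + 2 * m) / √2) by field_simp]
  refine div_le_div_of_nonneg_left hd (by positivity) ?_
  rw [div_le_iff₀ (by positivity), ← Real.sqrt_mul (by positivity),
    Real.le_sqrt (by positivity) (by positivity)]
  nlinarith [sq_nonneg (d - 2 * m)]

end Metrics

theorem stmt10_general {n : ℕ} (G : Set (EuclideanSpace ℝ (Fin n)))
    (hGo : IsOpen G) (hGconv : Convex ℝ G) (hGne : G ≠ univ)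
    (x y : EuclideanSpace ℝ (Fin n)) (hx : x ∈ G) (hy : y ∈ G) :
    sMet G x y ≤ Real.sqrt 2 * jStar G x y :=
  (sMet_le_pMet hGo hGconv hGne hx hy).trans
    (pMet_le_sqrt_two_mul_jStar (dd_pos hGo hGne hx) (dd_pos hGo hGne hy))

theorem stmt10 {n : ℕ} (G : Set (EuclideanSpace ℝ (Fin n)))
    (hGo : IsOpen G) (hGconv : Convex ℝ G) (hGne : G ≠ univ) (hGnonempty : G.Nonempty)
    (x y : EuclideanSpace ℝ (Fin n)) (hx : x ∈ G) (hy : y ∈ G) :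
    sMet G x y ≤ Real.sqrt 2 * jStar G x y :=
  stmt10_general G hGo hGconv hGne x y hx hy
end
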